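/- For every fixed 0 < p < 1 there exists N such that for all n ≥ N, the probability that some vertex of the complete directed graph on n vertices has all its n-1 outgoing edges 'timely' (each directed edge independently timely with probability p) is strictly less than the probability that the undirected Erdős–Rényi graph G(n, p²) is connected, where the latter is lower-bounded by 1 - n(1-p²)^(n-1) and the former equals 1 - (1 - p^(n-1))^n. -/

import Mathlib

/-!
By Bernoulli's inequality (the union bound), the left-hand side is at most `n p^(n-1)`. Both
`n p^(n-1)` and `n (1 - p²)^(n-1)` tend to `0`, so eventually their sum is below `1`, which is
a rearrangement of the claim.
-/

open Filter Topology

lemma one_sub_one_sub_pow_le_mul {R : Type*} [Ring R] [LinearOrder R] [IsStrictOrderedRing R]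
    {x : R} (hx : x ≤ 2) (n : ℕ) : 1 - (1 - x) ^ n ≤ n * x := by
  have h := one_add_mul_le_pow (neg_le_neg hx) n
  rw [mul_neg, ← sub_eq_add_neg, ← sub_eq_add_neg] at h
  exact sub_le_comm.2 h

lemma tendsto_natCast_mul_pow_sub_one {r : ℝ} (hr : |r| < 1) :
    Tendsto (fun n : ℕ => (n : ℝ) * r ^ (n - 1)) atTop (𝓝 0) := by
  rw [← tendsto_add_atTop_iff_nat 1]
  have h := (tendsto_self_mul_const_pow_of_abs_lt_one hr).add
    (tendsto_pow_atTop_nhds_zero_of_abs_lt_one hr)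
  simpa only [Nat.cast_add, Nat.cast_one, add_tsub_cancel_right, add_mul, one_mul, add_zero]
    using h

theorem stmt9 (p : ℝ) (hp0 : 0 < p) (hp1 : p < 1) :
    ∃ N : ℕ, ∀ n ≥ N,
      1 - (1 - p ^ (n - 1)) ^ n < 1 - (n : ℝ) * (1 - p ^ 2) ^ (n - 1) := by
  have hp : |p| < 1 := abs_lt.2 ⟨by linarith, hp1⟩
  have hq : |1 - p ^ 2| < 1 := abs_lt.2 ⟨by nlinarith, by nlinarith⟩
  have hsum := (tendsto_natCast_mul_pow_sub_one hp).add (tendsto_natCast_mul_pow_sub_one hq)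
  rw [add_zero] at hsum
  obtain ⟨N, hN⟩ := eventually_atTop.1 (hsum.eventually_lt_const one_pos)
  refine ⟨N, fun n hn => ?_⟩
  have hpow : p ^ (n - 1) ≤ 2 := (pow_le_one₀ hp0.le hp1.le).trans one_le_two
  linarith [hN n hn, one_sub_one_sub_pow_le_mul hpow n]
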